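/- If σ = θ·ς₁·ω^d(ς₂) with ς₁ς₂ = ς₂ς₁ = τ and a = τ^k·ω^d(τ^ℓ) with k + ℓ ≡ -1 (mod q) where q is the order of τ, then σa is an involution: (σa)² = 1. Moreover the permutations η_s = ω^{(s-1)d}(σa), s = 1,...,n-1, are involutions satisfying the Coxeter/braid relations, so the map (s,s+1) ↦ η_s extends to a homomorphism from S_n to S_{nd}. -/

import Mathlib

/-- The shift of a permutation of `ℕ` up by `d`: fixes `{0,…,d-1}` and acts as `σ`
conjugated by `k ↦ k + d` above. -/
def shift (d : ℕ) (σ : Equiv.Perm ℕ) : Equiv.Perm ℕ where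
  toFun k := if k < d then k else σ (k - d) + d
  invFun k := if k < d then k else σ⁻¹ (k - d) + d
  left_inv k := by
    by_cases h : k < d
    · simp [h]
    · dsimp only
      rw [if_neg h, if_neg (by omega), Nat.add_sub_cancel, Equiv.Perm.inv_def, Equiv.symm_apply_apply]
      omega
  right_inv k := by
    by_cases h : k < d
    · simp [h]
    · dsimp only
      rw [if_neg h, if_neg (by omega), Nat.add_sub_cancel, Equiv.Perm.inv_def, Equiv.apply_symm_apply]
      omega

/-- The involution of `ℕ` swapping the blocks `{0,…,d-1}` and `{d,…,2d-1}`. -/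
def theta (d : ℕ) : Equiv.Perm ℕ :=
  Function.Involutive.toPerm
    (fun k => if k < d then k + d else if k < 2 * d then k - d else k)
    (by intro k; dsimp only; split_ifs <;> omega)


/-!
Put `f = ς₁ τ^k`. Since `ς₂` commutes with `τ` and `τ^(k+ℓ+1) = 1`, we get `f⁻¹ = ς₂ τ^ℓ`, and
since permutations of `{0,…,d-1}` commute with shifted ones, `σa = θ f ω^d(f⁻¹)`: it sends `y < d`
to `d + f y`, sends `d + y` back to `f⁻¹ y`, and fixes everything from `2d` on.

Cut `ℕ` into the blocks `[b d, (b+1) d)` and let `Φ` apply `f^b` inside the `b`-th block.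
Conjugating by `Φ` turns the plain exchange of blocks `t` and `t+1` into `ω^{td}(σa)`. So `π ↦ Φ B(π) Φ⁻¹`,
with `B` the action of `S_n` permuting the first `n` blocks, is a homomorphism sending the adjacent
transposition `(s, s+1)` to `η_s`, and the Coxeter relations among the `η_s` are the images of those
among transpositions.
-/

open Equiv

section FixingIci

variable {d : ℕ} {g : Perm ℕ}

lemma apply_eq_self_of_mem_fixingSubgroup_Ici (hg : g ∈ fixingSubgroup (Perm ℕ) (Set.Ici d))
    {x : ℕ} (hx : d ≤ x) : g x = x :=
  (mem_fixingSubgroup_iff (Perm ℕ)).mp hg x hx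

lemma apply_lt_of_mem_fixingSubgroup_Ici (hg : g ∈ fixingSubgroup (Perm ℕ) (Set.Ici d))
    {x : ℕ} (hx : x < d) : g x < d := by
  by_contra! h
  have := g.injective (apply_eq_self_of_mem_fixingSubgroup_Ici hg h)
  omega

end FixingIci

lemma Nat.mul_add_div_of_lt {d y : ℕ} (hy : y < d) (b : ℕ) : (b * d + y) / d = b := by
  rw [Nat.add_comm, Nat.add_mul_div_right _ _ (by omega), Nat.div_eq_of_lt hy, Nat.zero_add]

section Shift

variable {d : ℕ}

lemma shift_apply_of_lt (σ : Perm ℕ) {x : ℕ} (hx : x < d) : shift d σ x = x :=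
  if_pos hx

lemma shift_apply_add (σ : Perm ℕ) (x : ℕ) : shift d σ (d + x) = d + σ x := by
  simp [shift, Nat.add_comm]

lemma shift_zero (σ : Perm ℕ) : shift 0 σ = σ := by
  ext x
  simpa using shift_apply_add (d := 0) σ x

lemma shift_mul (σ ρ : Perm ℕ) : shift d (σ * ρ) = shift d σ * shift d ρ := by
  ext x
  rcases lt_or_ge x d with hx | hx
  · simp [shift_apply_of_lt _ hx]
  · obtain ⟨x, rfl⟩ := Nat.exists_eq_add_of_le hx
    simp [shift_apply_add]

lemma commute_shift_of_mem_fixingSubgroup_Ici (σ : Perm ℕ) {g : Perm ℕ}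
    (hg : g ∈ fixingSubgroup (Perm ℕ) (Set.Ici d)) : Commute (shift d σ) g := by
  ext x
  rcases lt_or_ge x d with hx | hx
  · simp [shift_apply_of_lt _ hx, shift_apply_of_lt _ (apply_lt_of_mem_fixingSubgroup_Ici hg hx)]
  · obtain ⟨x, rfl⟩ := Nat.exists_eq_add_of_le hx
    simp [shift_apply_add, apply_eq_self_of_mem_fixingSubgroup_Ici hg]

end Shift

section Theta

variable {d : ℕ}

lemma theta_apply (x : ℕ) :
    theta d x = if x < d then x + d else if x < 2 * d then x - d else x :=
  rfl

lemma theta_apply_of_lt {x : ℕ} (hx : x < d) : theta d x = d + x := by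
  rw [theta_apply, if_pos hx, Nat.add_comm]

lemma theta_apply_add {x : ℕ} (hx : x < d) : theta d (d + x) = x := by
  rw [theta_apply]
  split_ifs <;> omega

lemma theta_apply_of_le {x : ℕ} (hx : 2 * d ≤ x) : theta d x = x := by
  rw [theta_apply]
  split_ifs <;> omega

end Theta

def twistedSwap (d : ℕ) (f : Perm ℕ) : Perm ℕ :=
  theta d * f * shift d f⁻¹

section TwistedSwap

variable {d : ℕ} {f : Perm ℕ}

lemma twistedSwap_apply_of_lt (hf : f ∈ fixingSubgroup (Perm ℕ) (Set.Ici d))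
    {y : ℕ} (hy : y < d) : twistedSwap d f y = d + f y := by
  simp [twistedSwap, shift_apply_of_lt _ hy,
    theta_apply_of_lt (apply_lt_of_mem_fixingSubgroup_Ici hf hy)]

lemma twistedSwap_apply_add (hf : f ∈ fixingSubgroup (Perm ℕ) (Set.Ici d))
    {y : ℕ} (hy : y < d) : twistedSwap d f (d + y) = f⁻¹ y := by
  rw [twistedSwap, Perm.mul_apply, Perm.mul_apply, shift_apply_add,
    apply_eq_self_of_mem_fixingSubgroup_Ici hf (Nat.le_add_right d _),
    theta_apply_add (apply_lt_of_mem_fixingSubgroup_Ici (inv_mem hf) hy)]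

lemma twistedSwap_apply_of_le (hf : f ∈ fixingSubgroup (Perm ℕ) (Set.Ici d))
    {x : ℕ} (hx : 2 * d ≤ x) : twistedSwap d f x = x := by
  obtain ⟨x, rfl⟩ := Nat.exists_eq_add_of_le (show d ≤ x by omega)
  simp [twistedSwap, shift_apply_add, apply_eq_self_of_mem_fixingSubgroup_Ici (inv_mem hf)
    (show d ≤ x by omega), apply_eq_self_of_mem_fixingSubgroup_Ici hf, theta_apply_of_le hx]

end TwistedSwap

lemma inv_mul_zpow_eq_of_zpow_eq_one {G : Type*} [Group G] {ς₁ ς₂ τ : G}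
    (hτ : ς₁ * ς₂ = τ) (hτ' : ς₂ * ς₁ = τ) {k ℓ : ℤ} (h : τ ^ (k + ℓ + 1) = 1) :
    (ς₁ * τ ^ k)⁻¹ = ς₂ * τ ^ ℓ := by
  have hcomm : Commute ς₂ τ := by
    show ς₂ * τ = τ * ς₂
    nth_rw 1 [← hτ]
    rw [← hτ', mul_assoc]
  refine inv_eq_of_mul_eq_one_right ?_
  calc ς₁ * τ ^ k * (ς₂ * τ ^ ℓ) = ς₁ * ς₂ * τ ^ k * τ ^ ℓ := by
        rw [mul_assoc ς₁, ← mul_assoc _ ς₂, ← (hcomm.zpow_right k).eq]; group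
    _ = τ ^ (k + ℓ + 1) := by rw [hτ]; group
    _ = 1 := h

lemma theta_mul_shift_mul_zpow_mul_shift_eq_twistedSwap {d : ℕ} {ς₁ ς₂ τ : Perm ℕ}
    (hτ : ς₁ * ς₂ = τ) (hτ' : ς₂ * ς₁ = τ) (hτd : τ ∈ fixingSubgroup (Perm ℕ) (Set.Ici d))
    {k ℓ : ℤ} (h : τ ^ (k + ℓ + 1) = 1) :
    theta d * ς₁ * shift d ς₂ * (τ ^ k * shift d (τ ^ ℓ)) = twistedSwap d (ς₁ * τ ^ k) := by
  rw [twistedSwap, inv_mul_zpow_eq_of_zpow_eq_one hτ hτ' h, shift_mul, mul_assoc _ (shift d ς₂),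
    ← mul_assoc (shift d ς₂), (commute_shift_of_mem_fixingSubgroup_Ici ς₂ (zpow_mem hτd k)).eq]
  group

section Blocks

variable (d : ℕ) [NeZero d]

def blockPerm : Perm ℕ →* Perm ℕ :=
  (Nat.divModEquiv d).symm.permCongrHom.toMonoidHom.comp
    { toFun π := π.prodCongr (Equiv.refl (Fin d))
      map_one' := rfl
      map_mul' _ _ := rfl }

lemma blockPerm_apply (π : Perm ℕ) (b : ℕ) {y : ℕ} (hy : y < d) :
    blockPerm d π (b * d + y) = π b * d + y := by
  have hby : b * d + y = (Nat.divModEquiv d).symm (b, ⟨y, hy⟩) := rfl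
  rw [hby, blockPerm, MonoidHom.comp_apply, MulEquiv.coe_toMonoidHom, permCongrHom_coe,
    permCongr_apply, symm_symm, apply_symm_apply]
  rfl

def blockPow (f : Perm ℕ) (hf : f ∈ fixingSubgroup (Perm ℕ) (Set.Ici d)) : Perm ℕ where
  toFun x := x / d * d + (f ^ (x / d)) (x % d)
  invFun x := x / d * d + (f ^ (x / d))⁻¹ (x % d)
  left_inv x := by
    have hx : (f ^ (x / d)) (x % d) < d :=
      apply_lt_of_mem_fixingSubgroup_Ici (pow_mem hf _) (Nat.mod_lt _ (NeZero.pos d))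
    dsimp only
    rw [Nat.mul_add_div_of_lt hx, Nat.mul_add_mod_of_lt hx, Perm.inv_def, symm_apply_apply,
      Nat.div_add_mod']
  right_inv x := by
    have hx : (f ^ (x / d))⁻¹ (x % d) < d :=
      apply_lt_of_mem_fixingSubgroup_Ici (inv_mem (pow_mem hf _)) (Nat.mod_lt _ (NeZero.pos d))
    dsimp only
    rw [Nat.mul_add_div_of_lt hx, Nat.mul_add_mod_of_lt hx, Perm.inv_def, apply_symm_apply,
      Nat.div_add_mod']

lemma blockPow_apply {f : Perm ℕ} (hf : f ∈ fixingSubgroup (Perm ℕ) (Set.Ici d)) (b : ℕ) {y : ℕ}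
    (hy : y < d) : blockPow d f hf (b * d + y) = b * d + (f ^ b) y := by
  show (b * d + y) / d * d + (f ^ ((b * d + y) / d)) ((b * d + y) % d) = _
  rw [Nat.mul_add_div_of_lt hy, Nat.mul_add_mod_of_lt hy]

end Blocks

lemma blockPow_mul_blockPerm_swap {d : ℕ} [NeZero d] {f : Perm ℕ}
    (hf : f ∈ fixingSubgroup (Perm ℕ) (Set.Ici d)) (t : ℕ) :
    blockPow d f hf * blockPerm d (swap t (t + 1)) =
      shift (t * d) (twistedSwap d f) * blockPow d f hf := by
  ext x
  obtain ⟨b, y, hy, rfl⟩ : ∃ b y, y < d ∧ x = b * d + y :=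
    ⟨x / d, x % d, Nat.mod_lt _ (NeZero.pos d), (Nat.div_add_mod' x d).symm⟩
  have hfy (c : ℕ) : (f ^ c) y < d := apply_lt_of_mem_fixingSubgroup_Ici (pow_mem hf c) hy
  simp only [Perm.mul_apply, blockPerm_apply d _ b hy, blockPow_apply d hf _ hy]
  rcases lt_or_ge b t with hbt | hbt
  · have hlt : b * d + (f ^ b) y < t * d :=
      calc b * d + (f ^ b) y < (b + 1) * d := by linarith [hfy b]
        _ ≤ t * d := Nat.mul_le_mul_right d hbt
    rw [swap_apply_of_ne_of_ne (by omega) (by omega), shift_apply_of_lt _ hlt]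
  obtain ⟨c, rfl⟩ := Nat.exists_eq_add_of_le hbt
  rw [add_mul t c d, add_assoc, shift_apply_add]
  obtain rfl | rfl | hc : c = 0 ∨ c = 1 ∨ 2 ≤ c := by omega
  · simp only [add_zero, zero_mul, zero_add, swap_apply_left]
    rw [twistedSwap_apply_of_lt hf (hfy t), pow_succ', Perm.mul_apply]
    ring
  · rw [swap_apply_right, one_mul, twistedSwap_apply_add hf (hfy _), pow_succ', Perm.mul_apply,
      Perm.inv_def, symm_apply_apply]
  · rw [swap_apply_of_ne_of_ne (by omega) (by omega), twistedSwap_apply_of_le hf (by nlinarith),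
      add_mul, add_assoc]

lemma shift_twistedSwap_eq_conj {d : ℕ} [NeZero d] {f : Perm ℕ}
    (hf : f ∈ fixingSubgroup (Perm ℕ) (Set.Ici d)) (t : ℕ) :
    shift (t * d) (twistedSwap d f) =
      blockPow d f hf * blockPerm d (swap t (t + 1)) * (blockPow d f hf)⁻¹ :=
  (mul_inv_eq_of_eq_mul (blockPow_mul_blockPerm_swap hf t)).symm

lemma twistedSwap_mul_self {d : ℕ} [NeZero d] {f : Perm ℕ}
    (hf : f ∈ fixingSubgroup (Perm ℕ) (Set.Ici d)) :
    twistedSwap d f * twistedSwap d f = 1 := by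
  have h := shift_twistedSwap_eq_conj hf 0
  rw [zero_mul, shift_zero] at h
  rw [h, ← MulAut.conj_apply, ← map_mul, ← map_mul, swap_mul_self, map_one, map_one]

lemma Equiv.Perm.viaEmbedding_swap {α β : Type*} [DecidableEq α] [DecidableEq β] (ι : α ↪ β)
    (a b : α) : (swap a b).viaEmbedding ι = swap (ι a) (ι b) := by
  ext x
  by_cases hx : x ∈ Set.range ι
  · obtain ⟨y, rfl⟩ := hx
    rw [viaEmbedding_apply, ι.injective.swap_apply]
  · rw [viaEmbedding_apply_of_notMem _ _ _ hx, swap_apply_of_ne_of_ne] <;>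
      rintro rfl <;> exact hx ⟨_, rfl⟩

lemma swap_braid {α : Type*} [DecidableEq α] {a b c : α} (hab : a ≠ b) (hac : a ≠ c)
    (hbc : b ≠ c) : swap a b * swap b c * swap a b = swap b c * swap a b * swap b c :=
  calc swap a b * swap b c * swap a b = swap b a * swap c b * swap b a := by
        rw [swap_comm a b, swap_comm c b]
    _ = swap a c := swap_mul_swap_mul_swap hbc.symm hac.symm
    _ = swap b c * swap a b * swap b c := by rw [swap_mul_swap_mul_swap hab hac, swap_comm]

lemma coxeter_relations_of_map_swap {G : Type*} [Group G] {n : ℕ} (ψ : Perm (Fin n) →* G)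
    (η : ℕ → G) (hη : ∀ (s : ℕ) (h1 : 1 ≤ s) (h2 : s ≤ n - 1),
      ψ (swap (⟨s - 1, by omega⟩ : Fin n) ⟨s, by omega⟩) = η s) :
    (∀ s, 1 ≤ s → s ≤ n - 1 → η s * η s = 1) ∧
      (∀ r s, 1 ≤ r → 1 ≤ s → s ≤ n - 1 → r + 2 ≤ s → η r * η s = η s * η r) ∧
      (∀ r, 1 ≤ r → r + 1 ≤ n - 1 → η r * η (r + 1) * η r = η (r + 1) * η r * η (r + 1)) := by
  refine ⟨fun s hs hsn => ?_, fun r s hr hs hsn hrs => ?_, fun r hr hrn => ?_⟩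
  · rw [← hη s hs hsn, ← map_mul, swap_mul_self, map_one]
  · have hdisj := Perm.disjoint_swap_swap (α := Fin n) (x := ⟨r - 1, by omega⟩) (y := ⟨r, by omega⟩)
      (z := ⟨s - 1, by omega⟩) (t := ⟨s, by omega⟩) (by simp [Fin.ext_iff]; omega)
    rw [← hη r hr (by omega), ← hη s hs hsn, ← map_mul, ← map_mul, hdisj.commute.eq]
  · rw [← hη r hr (by omega), ← hη (r + 1) (by omega) hrn]
    simp only [← map_mul, Nat.add_sub_cancel]
    rw [swap_braid] <;> simp only [ne_eq, Fin.ext_iff] <;> omega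

/-- If `σ = θ·ς₁·ω^d(ς₂)` with `ς₁ς₂ = ς₂ς₁ = τ` of order `q`, and
`a = τ^k·ω^d(τ^ℓ)` with `k + ℓ ≡ -1 (mod q)`, then `σa` is an involution, and the
translates `η_s = ω^{(s-1)d}(σa)` are involutions satisfying the Coxeter/braid
relations, so `(s, s+1) ↦ η_s` extends to a homomorphism `Sₙ → S_{nd}`. -/
theorem stmt_17 (d n : ℕ) (hd : 2 ≤ d) (ς₁ ς₂ τ : Equiv.Perm ℕ)
    (h₁ : ∀ k, d ≤ k → ς₁ k = k) (h₂ : ∀ k, d ≤ k → ς₂ k = k)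
    (hτ : ς₁ * ς₂ = τ) (hτ' : ς₂ * ς₁ = τ)
    (σ : Equiv.Perm ℕ) (hσ : σ = theta d * ς₁ * shift d ς₂)
    (q : ℕ) (hq : q = orderOf τ)
    (k ℓ : ℤ) (hkl : (q : ℤ) ∣ k + ℓ + 1)
    (a : Equiv.Perm ℕ) (ha : a = τ ^ k * shift d (τ ^ ℓ))
    (η : ℕ → Equiv.Perm ℕ) (hη : ∀ s, η s = shift ((s - 1) * d) (σ * a)) :
    (σ * a) * (σ * a) = 1 ∧
      (∀ s, 1 ≤ s → s ≤ n - 1 → η s * η s = 1) ∧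
      (∀ r s, 1 ≤ r → 1 ≤ s → s ≤ n - 1 → r + 2 ≤ s → η r * η s = η s * η r) ∧
      (∀ r, 1 ≤ r → r + 1 ≤ n - 1 →
        η r * η (r + 1) * η r = η (r + 1) * η r * η (r + 1)) ∧
      ∃ ψ : Equiv.Perm (Fin n) →* Equiv.Perm ℕ,
        ∀ (s : ℕ) (h1 : 1 ≤ s) (h2 : s ≤ n - 1),
          ψ (Equiv.swap (⟨s - 1, by omega⟩ : Fin n) (⟨s, by omega⟩ : Fin n)) = η s := by
  have : NeZero d := ⟨by omega⟩
  have hς₁ : ς₁ ∈ fixingSubgroup (Perm ℕ) (Set.Ici d) := (mem_fixingSubgroup_iff _).mpr h₁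
  have hς₂ : ς₂ ∈ fixingSubgroup (Perm ℕ) (Set.Ici d) := (mem_fixingSubgroup_iff _).mpr h₂
  have hτd : τ ∈ fixingSubgroup (Perm ℕ) (Set.Ici d) := hτ ▸ mul_mem hς₁ hς₂
  have hf : ς₁ * τ ^ k ∈ fixingSubgroup (Perm ℕ) (Set.Ici d) := mul_mem hς₁ (zpow_mem hτd k)
  have hσa : σ * a = twistedSwap d (ς₁ * τ ^ k) := by
    rw [hσ, ha]
    exact theta_mul_shift_mul_zpow_mul_shift_eq_twistedSwap hτ hτ' hτd
      (orderOf_dvd_iff_zpow_eq_one.mp (hq ▸ hkl))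
  let ψ : Perm (Fin n) →* Perm ℕ := (MulAut.conj (blockPow d _ hf)).toMonoidHom.comp
    ((blockPerm d).comp (Perm.viaEmbeddingHom Fin.valEmbedding))
  have hψ (s : ℕ) (h1 : 1 ≤ s) (h2 : s ≤ n - 1) :
      ψ (swap (⟨s - 1, by omega⟩ : Fin n) ⟨s, by omega⟩) = η s := by
    obtain ⟨t, rfl⟩ := Nat.exists_eq_add_of_le' h1
    simp only [ψ, MonoidHom.comp_apply, Perm.viaEmbeddingHom_apply, Perm.viaEmbedding_swap,
      MulEquiv.coe_toMonoidHom, MulAut.conj_apply, hη, hσa, Nat.add_sub_cancel,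
      shift_twistedSwap_eq_conj hf]
    rfl
  obtain ⟨hinv, hcomm, hbraid⟩ := coxeter_relations_of_map_swap ψ η hψ
  exact ⟨hσa ▸ twistedSwap_mul_self hf, hinv, hcomm, hbraid, ψ, hψ⟩
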